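/- Let Y and Z be independent standard normal random variables and let a₁, a₂, b, c₁, c₂ ∈ ℝ satisfy 2c₁ < 1, 2c₂ < 1 and b² < (1−2c₁)(1−2c₂). Then E[exp(a₁Y + a₂Z + bYZ + c₁Y² + c₂Z²)] = (1−2c₁)^{−1/2}(1−2c₂)^{−1/2}·(1 − b²(1−2c₁)^{−1}(1−2c₂)^{−1})^{−1/2} · exp( [a₁²(1−2c₁)^{−1} + a₂²(1−2c₂)^{−1} + 2a₁a₂b(1−2c₁)^{−1}(1−2c₂)^{−1}] / [2(1 − b²(1−2c₁)^{−1}(1−2c₂)^{−1})] ). -/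

import Mathlib

/-!
Completing the square gives `∫ exp (a x + c x²) dN(0,1) = (1 - 2c)^(-1/2) exp (a² / (2(1 - 2c)))`
for `2c < 1`. Integrating out `Z` first, the exponent is `(a₂ + b y) z + c₂ z²` in `z`, and the
result is again of the form `exp (α y + c y²)` with `α = a₁ + a₂ b / (1 - 2c₂)` and
`1 - 2c = (1 - 2c₁) - b² / (1 - 2c₂)`, which is positive exactly when `b² < (1 - 2c₁)(1 - 2c₂)`.
Doing the iterated integration with lower integrals of nonnegative functions (Tonelli) means no
integrability has to be checked beforehand.
-/

open MeasureTheory ProbabilityTheory Real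

lemma gaussianPDFReal_mul_exp_eq {c : ℝ} (hc : 1 - 2 * c ≠ 0) (a x : ℝ) :
    gaussianPDFReal 0 1 x * exp (a * x + c * x ^ 2) =
      (√(2 * π))⁻¹ * exp (a ^ 2 / (2 * (1 - 2 * c))) *
        exp (-((1 - 2 * c) / 2) * (x - a / (1 - 2 * c)) ^ 2) := by
  simp only [gaussianPDFReal, NNReal.coe_one, mul_one, sub_zero]
  rw [mul_assoc, mul_assoc, ← exp_add, ← exp_add]
  congr 2
  field_simp
  ring

lemma lintegral_ofReal_exp_mul_add_mul_sq_gaussianReal {c : ℝ} (hc : 2 * c < 1) (a : ℝ) :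
    ∫⁻ x, ENNReal.ofReal (exp (a * x + c * x ^ 2)) ∂gaussianReal 0 1 =
      ENNReal.ofReal ((1 - 2 * c) ^ (-(1 : ℝ) / 2) * exp (a ^ 2 / (2 * (1 - 2 * c)))) := by
  have hs : 0 < 1 - 2 * c := by linarith
  have hdensity := gaussianPDFReal_mul_exp_eq hs.ne' a
  have hint : Integrable (fun x ↦ gaussianPDFReal 0 1 x * exp (a * x + c * x ^ 2)) := by
    simp_rw [hdensity]
    exact ((integrable_exp_neg_mul_sq (by positivity)).comp_sub_right _).const_mul _
  rw [gaussianReal_of_var_ne_zero 0 one_ne_zero,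
    lintegral_withDensity_eq_lintegral_mul _ (measurable_gaussianPDF 0 1) (by fun_prop)]
  simp only [Pi.mul_apply, gaussianPDF, ← ENNReal.ofReal_mul (gaussianPDFReal_nonneg 0 1 _)]
  rw [← ofReal_integral_eq_lintegral_ofReal hint
    (ae_of_all _ fun x ↦ mul_nonneg (gaussianPDFReal_nonneg 0 1 x) (exp_pos _).le)]
  simp_rw [hdensity]
  rw [integral_const_mul, integral_sub_right_eq_self (fun x ↦ exp (-((1 - 2 * c) / 2) * x ^ 2)),
    integral_gaussian]
  congr 1
  rw [div_div_eq_mul_div, mul_comm π, sqrt_div' _ hs.le, sqrt_eq_rpow, sqrt_eq_rpow,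
    neg_div, rpow_neg hs.le]
  field_simp

lemma lintegral_ofReal_exp_quadratic_gaussianReal_snd {c₂ : ℝ} (hc₂ : 2 * c₂ < 1)
    (a₁ a₂ b c₁ y : ℝ) :
    ∫⁻ z, ENNReal.ofReal (exp (a₁ * y + a₂ * z + b * y * z + c₁ * y ^ 2 + c₂ * z ^ 2))
        ∂gaussianReal 0 1 =
      ENNReal.ofReal ((1 - 2 * c₂) ^ (-(1 : ℝ) / 2) * exp (a₂ ^ 2 / (2 * (1 - 2 * c₂))) *
        exp ((a₁ + a₂ * b / (1 - 2 * c₂)) * y + (c₁ + b ^ 2 / (2 * (1 - 2 * c₂))) * y ^ 2)) := by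
  have hv : 1 - 2 * c₂ ≠ 0 := by linarith
  have hsplit (z : ℝ) : exp (a₁ * y + a₂ * z + b * y * z + c₁ * y ^ 2 + c₂ * z ^ 2) =
      exp (a₁ * y + c₁ * y ^ 2) * exp ((a₂ + b * y) * z + c₂ * z ^ 2) := by
    rw [← exp_add]
    ring_nf
  simp_rw [hsplit, ENNReal.ofReal_mul (exp_pos _).le]
  rw [lintegral_const_mul' _ _ ENNReal.ofReal_ne_top,
    lintegral_ofReal_exp_mul_add_mul_sq_gaussianReal hc₂, ← ENNReal.ofReal_mul (exp_pos _).le]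
  congr 1
  rw [mul_left_comm, ← exp_add, mul_assoc, ← exp_add]
  congr 2
  field_simp
  ring

lemma integral_exp_quadratic_gaussianReal_prod {a₁ a₂ b c₁ c₂ : ℝ}
    (hc₁ : 2 * c₁ < 1) (hc₂ : 2 * c₂ < 1) (hb : b ^ 2 < (1 - 2 * c₁) * (1 - 2 * c₂)) :
    ∫ p, exp (a₁ * p.1 + a₂ * p.2 + b * p.1 * p.2 + c₁ * p.1 ^ 2 + c₂ * p.2 ^ 2)
        ∂(gaussianReal 0 1).prod (gaussianReal 0 1) =
      (1 - 2 * c₁) ^ (-(1 : ℝ) / 2) * (1 - 2 * c₂) ^ (-(1 : ℝ) / 2) *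
        (1 - b ^ 2 * (1 - 2 * c₁)⁻¹ * (1 - 2 * c₂)⁻¹) ^ (-(1 : ℝ) / 2) *
        exp ((a₁ ^ 2 * (1 - 2 * c₁)⁻¹ + a₂ ^ 2 * (1 - 2 * c₂)⁻¹ +
              2 * a₁ * a₂ * b * (1 - 2 * c₁)⁻¹ * (1 - 2 * c₂)⁻¹) /
            (2 * (1 - b ^ 2 * (1 - 2 * c₁)⁻¹ * (1 - 2 * c₂)⁻¹))) := by
  have hu : 0 < 1 - 2 * c₁ := by linarith
  have hv : 0 < 1 - 2 * c₂ := by linarith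
  have hD : 0 < 1 - b ^ 2 * (1 - 2 * c₁)⁻¹ * (1 - 2 * c₂)⁻¹ := by
    rw [mul_assoc, ← mul_inv, ← div_eq_mul_inv, sub_pos, div_lt_one (by positivity)]
    exact hb
  set α := a₁ + a₂ * b / (1 - 2 * c₂) with hα
  set c := c₁ + b ^ 2 / (2 * (1 - 2 * c₂)) with hc_def
  have hc : 1 - 2 * c = (1 - 2 * c₁) * (1 - b ^ 2 * (1 - 2 * c₁)⁻¹ * (1 - 2 * c₂)⁻¹) := by
    rw [hc_def]
    field_simp
    ring
  have hc_pos : 0 < 1 - 2 * c := hc ▸ mul_pos hu hD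
  have hexp : a₂ ^ 2 / (2 * (1 - 2 * c₂)) + α ^ 2 / (2 * (1 - 2 * c)) =
      (a₁ ^ 2 * (1 - 2 * c₁)⁻¹ + a₂ ^ 2 * (1 - 2 * c₂)⁻¹ +
          2 * a₁ * a₂ * b * (1 - 2 * c₁)⁻¹ * (1 - 2 * c₂)⁻¹) /
        (2 * (1 - b ^ 2 * (1 - 2 * c₁)⁻¹ * (1 - 2 * c₂)⁻¹)) := by
    have hdet : (1 - 2 * c₂) * (1 - 2 * c₁) - b ^ 2 ≠ 0 := by nlinarith
    rw [hc, hα]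
    field_simp
    ring
  have hK : 0 ≤ (1 - 2 * c₂) ^ (-(1 : ℝ) / 2) * exp (a₂ ^ 2 / (2 * (1 - 2 * c₂))) := by
    positivity
  have hf : Continuous fun p : ℝ × ℝ ↦
      exp (a₁ * p.1 + a₂ * p.2 + b * p.1 * p.2 + c₁ * p.1 ^ 2 + c₂ * p.2 ^ 2) := by
    fun_prop
  rw [integral_eq_lintegral_of_nonneg_ae (ae_of_all _ fun _ ↦ (exp_pos _).le)
      hf.aestronglyMeasurable,
    lintegral_prod _ hf.measurable.ennreal_ofReal.aemeasurable]
  simp_rw [lintegral_ofReal_exp_quadratic_gaussianReal_snd hc₂, ENNReal.ofReal_mul hK]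
  rw [lintegral_const_mul' _ _ ENNReal.ofReal_ne_top,
    lintegral_ofReal_exp_mul_add_mul_sq_gaussianReal (by linarith), ← ENNReal.ofReal_mul hK,
    ENNReal.toReal_ofReal (by positivity), ← hexp, exp_add, hc, mul_rpow hu.le hD.le]
  ring

lemma ProbabilityTheory.IndepFun.map_prodMk_eq_prod {Ω α β : Type*} {mΩ : MeasurableSpace Ω}
    {mα : MeasurableSpace α} {mβ : MeasurableSpace β} {P : Measure Ω} {X : Ω → α} {Y : Ω → β}
    {μ : Measure α} {ν : Measure β} [SigmaFinite μ] [SigmaFinite ν] [NeZero μ] [NeZero ν]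
    (h : IndepFun X Y P) (hX : P.map X = μ) (hY : P.map Y = ν) :
    P.map (fun ω ↦ (X ω, Y ω)) = μ.prod ν := by
  subst hX hY
  exact (indepFun_iff_map_prod_eq_prod_map_map' (.of_map_ne_zero (NeZero.ne _))
    (.of_map_ne_zero (NeZero.ne _)) inferInstance inferInstance).1 h

theorem gaussian_quadratic_mgf
    {Ω : Type*} [MeasurableSpace Ω] (P : Measure Ω)
    (Y Z : Ω → ℝ)
    (hIndep : IndepFun Y Z P)
    (hY : P.map Y = gaussianReal 0 1)
    (hZ : P.map Z = gaussianReal 0 1)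
    (a₁ a₂ b c₁ c₂ : ℝ)
    (hc₁ : 2 * c₁ < 1) (hc₂ : 2 * c₂ < 1)
    (hb : b ^ 2 < (1 - 2 * c₁) * (1 - 2 * c₂)) :
    ∫ ω, Real.exp (a₁ * Y ω + a₂ * Z ω + b * Y ω * Z ω +
        c₁ * Y ω ^ 2 + c₂ * Z ω ^ 2) ∂P =
      (1 - 2 * c₁) ^ (-(1 : ℝ) / 2) * (1 - 2 * c₂) ^ (-(1 : ℝ) / 2) *
        (1 - b ^ 2 * (1 - 2 * c₁)⁻¹ * (1 - 2 * c₂)⁻¹) ^ (-(1 : ℝ) / 2) *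
        Real.exp
          ((a₁ ^ 2 * (1 - 2 * c₁)⁻¹ + a₂ ^ 2 * (1 - 2 * c₂)⁻¹ +
              2 * a₁ * a₂ * b * (1 - 2 * c₁)⁻¹ * (1 - 2 * c₂)⁻¹) /
            (2 * (1 - b ^ 2 * (1 - 2 * c₁)⁻¹ * (1 - 2 * c₂)⁻¹))) := by
  have hlaw := hIndep.map_prodMk_eq_prod hY hZ
  have hYZ : AEMeasurable (fun ω ↦ (Y ω, Z ω)) P := .of_map_ne_zero (hlaw ▸ NeZero.ne _)
  rw [← integral_exp_quadratic_gaussianReal_prod hc₁ hc₂ hb, ← hlaw, integral_map hYZ (by fun_prop)]
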